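/- Let V be a finite-dimensional real inner product space with norm ‖·‖, let Z : V → ℂ be an ℝ-linear map, and let S ⊆ V be any subset. Then the following are equivalent: (i) there exists C > 0 such that ‖v‖ ≤ C·|Z(v)| for all v ∈ S; (ii) there exists a quadratic form Q on V such that Q(v) < 0 for every nonzero v ∈ ker Z, and Q(v) ≥ 0 for every v ∈ S. -/

import Mathlib

/-!
Given (i), the form `Q v = C² ‖Z v‖² - ‖v‖²` works. Conversely, the vectors of norm one on which
`Q ≥ 0` form a compact set missing `ker Z`, so `‖Z‖` has a positive minimum `ε` there, and
homogeneity gives `‖v‖ ≤ ε⁻¹ ‖Z v‖` whenever `Q v ≥ 0`.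
-/

open Metric

theorem QuadraticMap.continuous_of_finiteDimensional {V : Type*} [NormedAddCommGroup V]
    [NormedSpace ℝ V] [FiniteDimensional ℝ V] (Q : QuadraticForm ℝ V) : Continuous Q := by
  have hB : ∀ v, Q v = (QuadraticMap.associated Q).toContinuousBilinearMap v v := fun v => by
    rw [LinearMap.toContinuousBilinearMap_apply, QuadraticMap.associated_eq_self_apply]
  simp only [funext hB]
  fun_prop

theorem exists_norm_le_mul_norm_of_neg_on_ker {V W : Type*} [NormedAddCommGroup V]
    [NormedSpace ℝ V] [FiniteDimensional ℝ V] [NormedAddCommGroup W] [NormedSpace ℝ W]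
    (Q : QuadraticForm ℝ V) (Z : V →ₗ[ℝ] W) (hker : ∀ v, Z v = 0 → v ≠ 0 → Q v < 0) :
    ∃ C, 0 < C ∧ ∀ v, 0 ≤ Q v → ‖v‖ ≤ C * ‖Z v‖ := by
  set K := sphere (0 : V) 1 ∩ {u | 0 ≤ Q u}
  have hK : IsCompact K := (isCompact_sphere 0 1).inter_right
    (isClosed_le continuous_const Q.continuous_of_finiteDimensional)
  have hZK : ∀ u ∈ K, 0 < ‖Z u‖ := by
    rintro u ⟨hu, hQu⟩
    refine norm_pos_iff.2 fun hZu => (hker u hZu ?_).not_ge hQu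
    exact ne_zero_of_mem_unit_sphere ⟨u, hu⟩
  obtain ⟨ε, hε, hεK⟩ := hK.exists_forall_le'
    (continuous_norm.comp Z.continuous_of_finiteDimensional).continuousOn hZK
  refine ⟨ε⁻¹, inv_pos.2 hε, fun v hQv => ?_⟩
  rcases eq_or_ne v 0 with rfl | hv
  · simp
  have hnv : 0 < ‖v‖ := norm_pos_iff.2 hv
  have hu : ‖v‖⁻¹ • v ∈ K :=
    ⟨by simp [norm_smul, hnv.ne'], by rw [Set.mem_ofPred_eq, Q.map_smul]; positivity⟩
  have hεv : ε ≤ ‖Z (‖v‖⁻¹ • v)‖ := hεK _ hu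
  rw [map_smul, norm_smul, norm_inv, norm_norm, le_inv_mul_iff₀ hnv] at hεv
  rwa [le_inv_mul_iff₀ hε, mul_comm]

section NormSqForm

variable (E : Type*) [NormedAddCommGroup E] [InnerProductSpace ℝ E]

noncomputable def normSqForm : QuadraticForm ℝ E := LinearMap.BilinMap.toQuadraticMap (innerₗ E)

@[simp]
theorem normSqForm_apply (v : E) : normSqForm E v = ‖v‖ ^ 2 := by
  simp [normSqForm, LinearMap.BilinMap.toQuadraticMap_apply]

end NormSqForm

theorem exists_quadraticForm_of_norm_le_mul_norm {V W : Type*} [NormedAddCommGroup V]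
    [InnerProductSpace ℝ V] [NormedAddCommGroup W] [InnerProductSpace ℝ W] (Z : V →ₗ[ℝ] W)
    {S : Set V} {C : ℝ} (hS : ∀ v ∈ S, ‖v‖ ≤ C * ‖Z v‖) :
    ∃ Q : QuadraticForm ℝ V, (∀ v, Z v = 0 → v ≠ 0 → Q v < 0) ∧ ∀ v ∈ S, 0 ≤ Q v := by
  refine ⟨C ^ 2 • (normSqForm W).comp Z - normSqForm V, fun v hZv hv => ?_, fun v hv => ?_⟩
  · simpa [hZv] using pow_pos (norm_pos_iff.2 hv) 2
  · simpa only [sub_apply, smul_apply, QuadraticMap.comp_apply, normSqForm_apply, smul_eq_mul,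
      sub_nonneg, mul_pow] using pow_le_pow_left₀ (norm_nonneg v) (hS v hv) 2

/-- Lemma A.4 of the paper: equivalence of the two forms of the
support property.  `V` is a finite-dimensional real inner product space, `Z : V → ℂ`
ℝ-linear, `S ⊆ V`.  Then: (i) there is `C > 0` with `‖v‖ ≤ C·|Z(v)|` for all `v ∈ S`
iff (ii) there is a quadratic form `Q` on `V` which is negative definite on `ker Z`
and nonnegative on `S`. -/
theorem stmt_6 (V : Type*) [NormedAddCommGroup V] [InnerProductSpace ℝ V]
    [FiniteDimensional ℝ V] (Z : V →ₗ[ℝ] ℂ) (S : Set V) :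
    (∃ C : ℝ, 0 < C ∧ ∀ v ∈ S, ‖v‖ ≤ C * ‖Z v‖) ↔
      (∃ Q : QuadraticForm ℝ V,
        (∀ v : V, Z v = 0 → v ≠ 0 → Q v < 0) ∧ ∀ v ∈ S, 0 ≤ Q v) := by
  constructor
  · rintro ⟨C, -, hS⟩
    exact exists_quadraticForm_of_norm_le_mul_norm Z hS
  · rintro ⟨Q, hker, hQS⟩
    obtain ⟨C, hC, hQ⟩ := exists_norm_le_mul_norm_of_neg_on_ker Q Z hker
    exact ⟨C, hC, fun v hv => hQ v (hQS v hv)⟩
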